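/- Algebraic Birkhoff decomposition: let H be a commutative ℕ-graded connected Hopf algebra over k, let A = A_− ⊕ A_+ be a Birkhoff sum, and let φ: H → A be a unital k-algebra homomorphism. Then there exist unital k-algebra homomorphisms φ_−, φ_+: H → A such that φ_−(h) ∈ A_− and φ_+(h) ∈ A_+ for every h ∈ Ker ε, and φ = φ_−^{*−1} * φ_+, where * is the convolution product on algebra homomorphisms H→A, (ψ*ψ')(h) = m_A(ψ⊗ψ')(Δh), and φ_−^{*−1} = φ_−∘S is the convolution inverse of φ_−; moreover φ_+ = φ_− * φ, and φ_− is determined by φ_−(1)=1_A and φ_−(h) = −T[φ(h) + Σ φ_−(h')φ(h'')] for h ∈ Ker ε, where Δh = h⊗1 + 1⊗h + Σ h'⊗h''. -/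

import Mathlib

/-!
The counterterm `φ₋` is built degree by degree from the recursion
`φ₋ x = -T (m (φ₋ ⊗ φ) (Δx - x ⊗ 1))`: by connectedness, `Δx - x ⊗ 1` only has left tensor
factors of degree lower than that of `x`, so the right-hand side only involves `φ₋` on lower
degrees. Since `T` projects onto `A₋`, `φ₋` takes values in `A₋` on positive degrees, and
`φ₊ = φ₋ * φ = (1 - T) (m (φ₋ ⊗ φ) (Δx - x ⊗ 1))` takes values in `A₊`. Because `A₋` and `A₊` are
subalgebras, `T` satisfies the Rota–Baxter identity, and an induction on the total degree turns
it into multiplicativity of `φ₋`. Finally `φ₋ ∘ S` is the convolution inverse of `φ₋`.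
-/

open TensorProduct

/-- The convolution product on linear maps from a coalgebra `H` to an algebra `A`:
`(ψ * ψ')(h) = m_A ((ψ ⊗ ψ')(Δ h))`. -/
noncomputable def convA {R H A : Type*} [CommSemiring R] [AddCommMonoid H] [Module R H]
    [Coalgebra R H] [Semiring A] [Algebra R A] (ψ ψ' : H →ₗ[R] A) : H →ₗ[R] A :=
  LinearMap.mul' R A ∘ₗ TensorProduct.map ψ ψ' ∘ₗ Coalgebra.comul

/-- The submodule `A ⊗ B` of `H ⊗ H` spanned by the pure tensors `a ⊗ b` with `a ∈ A`,
`b ∈ B`. -/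
noncomputable def tensorSub {R H : Type*} [CommSemiring R] [AddCommMonoid H] [Module R H]
    (A B : Submodule R H) : Submodule R (H ⊗[R] H) :=
  Submodule.span R {z : H ⊗[R] H | ∃ a ∈ A, ∃ b ∈ B, z = a ⊗ₜ[R] b}

open Coalgebra

section RotaBaxter

variable {R A : Type*} [CommRing R] [CommRing A] [Algebra R A]

def IsRotaBaxter (T : A →ₗ[R] A) : Prop :=
  ∀ a b, T (a * b) + T a * T b = T (T a * b + a * T b)

theorem apply_mem_and_sub_apply_mem {M : Type*} [AddCommGroup M] [Module R M]
    {Mneg Mpos : Submodule R M} {T : M →ₗ[R] M} (hcod : Codisjoint Mneg Mpos)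
    (hTneg : ∀ a ∈ Mneg, T a = a) (hTpos : ∀ a ∈ Mpos, T a = 0) (a : M) :
    T a ∈ Mneg ∧ a - T a ∈ Mpos := by
  obtain ⟨u, hu, v, hv, rfl⟩ :=
    Submodule.mem_sup.1 (show a ∈ Mneg ⊔ Mpos from hcod.eq_top ▸ Submodule.mem_top)
  rw [map_add, hTneg u hu, hTpos v hv, add_zero, add_sub_cancel_left]
  exact ⟨hu, hv⟩

variable {Aneg Apos : Submodule R A} {T : A →ₗ[R] A}

theorem isRotaBaxter_of_codisjoint (hcod : Codisjoint Aneg Apos)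
    (hnegmul : ∀ a ∈ Aneg, ∀ b ∈ Aneg, a * b ∈ Aneg)
    (hposmul : ∀ a ∈ Apos, ∀ b ∈ Apos, a * b ∈ Apos)
    (hTneg : ∀ a ∈ Aneg, T a = a) (hTpos : ∀ a ∈ Apos, T a = 0) : IsRotaBaxter T := by
  intro a b
  obtain ⟨ha₁, ha₂⟩ := apply_mem_and_sub_apply_mem hcod hTneg hTpos a
  obtain ⟨hb₁, hb₂⟩ := apply_mem_and_sub_apply_mem hcod hTneg hTpos b
  have h₁ := hTneg _ (hnegmul _ ha₁ _ hb₁)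
  have h₂ := hTpos _ (hposmul _ ha₂ _ hb₂)
  rw [show (a - T a) * (b - T b) = a * b - (T a * b + a * T b) + T a * T b by ring,
    map_add, map_sub, h₁] at h₂
  linear_combination h₂

end RotaBaxter

section TensorSub

variable {R H : Type*} [CommSemiring R] [AddCommMonoid H] [Module R H]

theorem tensorSub_le {P Q : Submodule R H} {N : Submodule R (H ⊗[R] H)}
    (h : ∀ a ∈ P, ∀ b ∈ Q, a ⊗ₜ[R] b ∈ N) : tensorSub P Q ≤ N :=
  Submodule.span_le.2 fun _ ⟨a, ha, b, hb, hz⟩ => hz ▸ h a ha b hb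

theorem tmul_mem_tensorSub {P Q : Submodule R H} {a b : H} (ha : a ∈ P) (hb : b ∈ Q) :
    a ⊗ₜ[R] b ∈ tensorSub P Q :=
  Submodule.subset_span ⟨a, ha, b, hb, rfl⟩

theorem tensorSub_mono {P P' Q Q' : Submodule R H} (hP : P ≤ P') (hQ : Q ≤ Q') :
    tensorSub P Q ≤ tensorSub P' Q' :=
  Submodule.span_mono fun _ ⟨a, ha, b, hb, hz⟩ => ⟨a, hP ha, b, hQ hb, hz⟩

end TensorSub

section GradedBialgebra

def IsGradedComul {R H : Type*} [CommSemiring R] [AddCommMonoid H] [Module R H] [Coalgebra R H]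
    (𝒜 : ℕ → Submodule R H) : Prop :=
  ∀ n, ∀ h ∈ 𝒜 n, comul (R := R) h ∈ ⨆ (p : ℕ × ℕ) (_ : p.1 + p.2 = n), tensorSub (𝒜 p.1) (𝒜 p.2)

variable {R H : Type*} [CommRing R] [Ring H] [Bialgebra R H] {𝒜 : ℕ → Submodule R H}

theorem comul_mul_sub_tmul_one (a b : H) :
    comul (R := R) (a * b) - (a * b) ⊗ₜ[R] 1 =
      a ⊗ₜ[R] 1 * (comul b - b ⊗ₜ[R] 1) + (comul a - a ⊗ₜ[R] 1) * b ⊗ₜ[R] 1 +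
        (comul a - a ⊗ₜ[R] 1) * (comul b - b ⊗ₜ[R] 1) := by
  rw [Bialgebra.comul_mul, ← mul_one (1 : H), ← Algebra.TensorProduct.tmul_mul_tmul]
  noncomm_ring

theorem eq_counit_smul_one (hconn : 𝒜 0 = Submodule.span R {(1 : H)}) {x : H}
    (hx : x ∈ 𝒜 0) : x = counit (R := R) x • (1 : H) := by
  rw [hconn] at hx
  obtain ⟨c, rfl⟩ := Submodule.mem_span_singleton.1 hx
  simp

theorem comul_sub_tmul_one_mem (hind : iSupIndep 𝒜) (hconn : 𝒜 0 = Submodule.span R {(1 : H)})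
    (hcomul : IsGradedComul 𝒜) {n : ℕ} {x : H} (hx : x ∈ 𝒜 n) :
    comul x - x ⊗ₜ[R] 1 ∈ ⨆ p < n, tensorSub (𝒜 p) (𝒜 (n - p)) := by
  set W := ⨆ p < n, tensorSub (𝒜 p) (𝒜 (n - p))
  -- The `(n, 0)`-component of `Δx` is some `y ⊗ 1`; applying `id ⊗ ε` shows that `x - y` has
  -- degree `< n`, hence `y = x` by independence of the grading.
  have hle : (⨆ (p : ℕ × ℕ) (_ : p.1 + p.2 = n), tensorSub (𝒜 p.1) (𝒜 p.2)) ≤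
      (𝒜 n).map ((TensorProduct.mk R H H).flip 1) ⊔ W := by
    refine iSup₂_le fun pq hpq => ?_
    obtain ⟨p, _ | q⟩ := pq
    · refine le_sup_of_le_left (tensorSub_le fun a ha b hb => ?_)
      rw [eq_counit_smul_one hconn hb, tmul_smul, smul_tmul']
      exact ⟨_, Submodule.smul_mem _ _ ((show p = n by simpa using hpq) ▸ ha), rfl⟩
    · simp only at hpq
      exact le_sup_of_le_right
        (le_iSup₂_of_le p (by omega) (by rw [← hpq, Nat.add_sub_cancel_left]))
  obtain ⟨_, ⟨y, hy, rfl⟩, w, hw, hyw⟩ := Submodule.mem_sup.1 (hle (hcomul n x hx))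
  let ρ : H ⊗[R] H →ₗ[R] H := (TensorProduct.rid R H).toLinearMap ∘ₗ counit.lTensor H
  have hρ : ∀ a b : H, ρ (a ⊗ₜ b) = counit (R := R) b • a := fun a b => by simp [ρ]
  have hρW : W ≤ (⨆ p < n, 𝒜 p).comap ρ := iSup₂_le fun p hp => tensorSub_le fun a ha b _ =>
    show ρ (a ⊗ₜ b) ∈ _ from hρ a b ▸ Submodule.smul_mem _ _ (le_iSup₂ (f := fun p _ => 𝒜 p) p hp ha)
  have hρx : y + ρ w = x := by
    have hρΔ : ρ (comul x) = x := by simp [ρ]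
    simpa [hρ, hρΔ] using congrArg ρ hyw
  have hxy : x = y := sub_eq_zero.1 <| Submodule.disjoint_def.1
    (hind.disjoint_biSup (y := {p | p < n}) (lt_irrefl n)) _ (sub_mem hx hy)
    (by rw [← hρx, add_sub_cancel_left]; exact hρW hw)
  rw [← hyw, hxy]
  simpa using hw

theorem counit_eq_zero_of_mem (hind : iSupIndep 𝒜) (hconn : 𝒜 0 = Submodule.span R {(1 : H)})
    (hcomul : IsGradedComul 𝒜)
    {n : ℕ} (hn : n ≠ 0) {x : H} (hx : x ∈ 𝒜 n) : counit (R := R) x = 0 := by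
  -- Applying `ε ⊗ id` to `Δx - x ⊗ 1`, whose right tensor factors have positive degree, puts
  -- `ε x • 1` both in degree `0` and in positive degrees.
  let σ : H ⊗[R] H →ₗ[R] H := (TensorProduct.lid R H).toLinearMap ∘ₗ counit.rTensor H
  have hσ : ∀ a b : H, σ (a ⊗ₜ b) = counit (R := R) a • b := fun a b => by simp [σ]
  have hW : (⨆ p < n, tensorSub (𝒜 p) (𝒜 (n - p))) ≤ (⨆ q ≠ 0, 𝒜 q).comap σ :=
    iSup₂_le fun p hp => tensorSub_le fun a _ b hb => show σ (a ⊗ₜ b) ∈ _ from hσ a b ▸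
      Submodule.smul_mem _ _ (le_iSup₂ (f := fun (q : ℕ) (_ : q ≠ 0) => 𝒜 q) (n - p) (by omega) hb)
  have hsum : counit (R := R) x • (1 : H) = x - σ (comul x - x ⊗ₜ[R] 1) := by
    simp [σ, rTensor_counit_comul]
  have h0 : counit (R := R) x • (1 : H) ∈ 𝒜 0 ⊓ ⨆ q ≠ 0, 𝒜 q := by
    refine ⟨hconn ▸ Submodule.smul_mem _ _ (Submodule.mem_span_singleton_self 1), ?_⟩
    rw [hsum]
    exact sub_mem (le_iSup₂ (f := fun (q : ℕ) (_ : q ≠ 0) => 𝒜 q) n hn hx)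
      (hW (comul_sub_tmul_one_mem hind hconn hcomul hx))
  rw [(hind 0).eq_bot, Submodule.mem_bot] at h0
  simpa using congrArg (counit (R := R)) h0

theorem ker_counit_le (hdirect : DirectSum.IsInternal 𝒜)
    (hconn : 𝒜 0 = Submodule.span R {(1 : H)})
    (hcomul : IsGradedComul 𝒜) :
    LinearMap.ker (counit (R := R) (A := H)) ≤ ⨆ n ≠ 0, 𝒜 n := by
  intro h hε
  have hpos : ⨆ n ≠ 0, 𝒜 n ≤ LinearMap.ker (counit (R := R) (A := H)) := iSup₂_le fun n hn x hx =>
    counit_eq_zero_of_mem hdirect.submodule_iSupIndep hconn hcomul hn hx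
  have hmem : h ∈ 𝒜 0 ⊔ ⨆ n ≠ 0, 𝒜 n := by
    rw [← iSup_split_single, hdirect.submodule_iSup_eq_top]
    trivial
  obtain ⟨a, ha, b, hb, rfl⟩ := Submodule.mem_sup.1 hmem
  have hεa : counit (R := R) a = 0 := by
    simpa [LinearMap.mem_ker.1 (hpos hb)] using LinearMap.mem_ker.1 hε
  rwa [eq_counit_smul_one hconn ha, hεa, zero_smul, zero_add]

theorem comul_sub_tmul_one_mem_tensorSub (hind : iSupIndep 𝒜)
    (hconn : 𝒜 0 = Submodule.span R {(1 : H)})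
    (hcomul : IsGradedComul 𝒜)
    {n : ℕ} {x : H} (hx : x ∈ 𝒜 n) : comul x - x ⊗ₜ[R] 1 ∈ tensorSub (⨆ i < n, 𝒜 i) ⊤ :=
  (iSup₂_le fun p hp => tensorSub_mono (le_iSup₂ (f := fun i (_ : i < n) => 𝒜 i) p hp) le_top :
    ⨆ p < n, tensorSub (𝒜 p) (𝒜 (n - p)) ≤ _) (comul_sub_tmul_one_mem hind hconn hcomul hx)

end GradedBialgebra

namespace Birkhoff

variable {R H A : Type*} [CommRing R] [Ring H] [CommRing A] [Algebra R A]

section MulMap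

variable [Algebra R H]

noncomputable def mulMap (f g : H →ₗ[R] A) : H ⊗[R] H →ₗ[R] A :=
  LinearMap.mul' R A ∘ₗ TensorProduct.map f g

@[simp]
theorem mulMap_tmul (f g : H →ₗ[R] A) (a b : H) : mulMap f g (a ⊗ₜ b) = f a * g b := by
  simp [mulMap]

theorem mulMap_eq_of_le_eqLocus {f f' : H →ₗ[R] A} (g : H →ₗ[R] A) {P : Submodule R H}
    (h : P ≤ LinearMap.eqLocus f f') {u : H ⊗[R] H} (hu : u ∈ tensorSub P ⊤) :
    mulMap f g u = mulMap f' g u :=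
  (tensorSub_le (N := LinearMap.eqLocus (mulMap f g) (mulMap f' g)) fun a ha b _ => by
    simp [LinearMap.mem_eqLocus.1 (h ha)]) hu

theorem mulMap_mul {ψ : H →ₗ[R] A} (φ : H →ₐ[R] A) {P Q : Submodule R H}
    (hψ : ∀ a ∈ P, ∀ b ∈ Q, ψ (a * b) = ψ a * ψ b) {u v : H ⊗[R] H}
    (hu : u ∈ tensorSub P ⊤) (hv : v ∈ tensorSub Q ⊤) :
    mulMap ψ φ.toLinearMap (u * v) = mulMap ψ φ.toLinearMap u * mulMap ψ φ.toLinearMap v := by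
  induction hu using Submodule.span_induction with
  | mem _ hu =>
    obtain ⟨a, ha, b, -, rfl⟩ := hu
    induction hv using Submodule.span_induction with
    | mem _ hv =>
      obtain ⟨c, hc, d, -, rfl⟩ := hv
      simp only [Algebra.TensorProduct.tmul_mul_tmul, mulMap_tmul, hψ a ha c hc,
        AlgHom.toLinearMap_apply, map_mul]
      ring
    | zero => simp
    | add v w _ _ hv hw => simp [mul_add, hv, hw]
    | smul r v _ hv => rw [mul_smul_comm, map_smul, hv, map_smul, mul_smul_comm]
  | zero => simp
  | add u w _ _ hu hw => simp [add_mul, hu, hw]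
  | smul r u _ hu => rw [smul_mul_assoc, map_smul, hu, map_smul, smul_mul_assoc]

theorem map_mul_of_mem_iSup_lt {𝒜 : ℕ → Submodule R H} {ψ : H →ₗ[R] A} {p q : ℕ}
    (h : ∀ i < p, ∀ j < q, ∀ a ∈ 𝒜 i, ∀ b ∈ 𝒜 j, ψ (a * b) = ψ a * ψ b)
    {a b : H} (ha : a ∈ ⨆ i < p, 𝒜 i) (hb : b ∈ ⨆ j < q, 𝒜 j) : ψ (a * b) = ψ a * ψ b := by
  have hb' : ∀ i < p, ∀ c ∈ 𝒜 i,
      b ∈ LinearMap.eqLocus (ψ ∘ₗ LinearMap.mulLeft R c) (LinearMap.mulLeft R (ψ c) ∘ₗ ψ) :=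
    fun i hi c hc => (iSup₂_le fun j hj d hd => h i hi j hj c hc d hd :
      ⨆ j < q, 𝒜 j ≤ LinearMap.eqLocus (ψ ∘ₗ LinearMap.mulLeft R c)
        (LinearMap.mulLeft R (ψ c) ∘ₗ ψ)) hb
  exact (iSup₂_le fun i hi c hc => hb' i hi c hc :
    ⨆ i < p, 𝒜 i ≤ LinearMap.eqLocus (ψ ∘ₗ LinearMap.mulRight R b)
      (LinearMap.mulRight R (ψ b) ∘ₗ ψ)) ha

end MulMap

variable [Bialgebra R H]

section Counterterm

open DirectSum

variable (𝒜 : ℕ → Submodule R H) [GradedAlgebra 𝒜] (T : A →ₗ[R] A) (φ : H →ₗ[R] A)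

/-- `negPartUpTo 𝒜 T φ n` is `φ₋` on the elements of degree `≤ n` and zero in higher degrees. -/
noncomputable def negPartUpTo : ℕ → H →ₗ[R] A
  | 0 => Algebra.linearMap R A ∘ₗ counit ∘ₗ GradedAlgebra.proj 𝒜 0
  | n + 1 => negPartUpTo n -
      T ∘ₗ mulMap (negPartUpTo n) φ ∘ₗ comul ∘ₗ GradedAlgebra.proj 𝒜 (n + 1)

noncomputable def negPart : H →ₗ[R] A :=
  toModule R ℕ A (fun n => negPartUpTo 𝒜 T φ n ∘ₗ (𝒜 n).subtype) ∘ₗ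
    (decomposeLinearEquiv 𝒜).toLinearMap

variable {𝒜 T φ}

theorem negPartUpTo_of_lt {k : ℕ} {x : H} (hx : x ∈ 𝒜 k) :
    ∀ {n : ℕ}, n < k → negPartUpTo 𝒜 T φ n x = 0
  | 0, hk => by simp [negPartUpTo, decompose_of_mem_ne 𝒜 hx hk.ne']
  | n + 1, hk => by
    simp [negPartUpTo, decompose_of_mem_ne 𝒜 hx hk.ne',
      negPartUpTo_of_lt hx (n.lt_succ_self.trans hk)]

theorem negPartUpTo_of_le {k : ℕ} {x : H} (hx : x ∈ 𝒜 k) {n : ℕ} (hkn : k ≤ n) :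
    negPartUpTo 𝒜 T φ n x = negPartUpTo 𝒜 T φ k x := by
  induction n, hkn using Nat.le_induction with
  | base => rfl
  | succ n hkn ih => simp [negPartUpTo, decompose_of_mem_ne 𝒜 hx (by omega : k ≠ n + 1), ih]

theorem negPart_of_mem {k : ℕ} {x : H} (hx : x ∈ 𝒜 k) :
    negPart 𝒜 T φ x = negPartUpTo 𝒜 T φ k x := by
  lift x to 𝒜 k using hx
  simp [negPart, decomposeLinearEquiv_apply_coe]

theorem iSup_le_eqLocus_negPartUpTo (n : ℕ) :
    ⨆ i < n + 1, 𝒜 i ≤ LinearMap.eqLocus (negPartUpTo 𝒜 T φ n) (negPart 𝒜 T φ) :=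
  iSup₂_le fun _ hi _ hx => (negPartUpTo_of_le hx (Nat.lt_succ_iff.1 hi)).trans
    (negPart_of_mem hx).symm

theorem negPart_one : negPart 𝒜 T φ 1 = 1 := by
  rw [negPart_of_mem SetLike.GradedOne.one_mem]
  simp only [negPartUpTo, LinearMap.comp_apply, GradedAlgebra.proj_apply,
    decompose_of_mem_same 𝒜 SetLike.GradedOne.one_mem]
  simp

end Counterterm

section Recursion

open DirectSum

variable {𝒜 : ℕ → Submodule R H} [GradedAlgebra 𝒜] {T : A →ₗ[R] A}

theorem negPart_of_mem_of_ne_zero (φ : H →ₗ[R] A) (hconn : 𝒜 0 = Submodule.span R {(1 : H)})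
    (hcomul : IsGradedComul 𝒜)
    {n : ℕ} (hn : n ≠ 0) {x : H} (hx : x ∈ 𝒜 n) :
    negPart 𝒜 T φ x = -T (mulMap (negPart 𝒜 T φ) φ (comul x - x ⊗ₜ[R] 1)) := by
  obtain ⟨n, rfl⟩ := Nat.exists_eq_succ_of_ne_zero hn
  have hΔ := comul_sub_tmul_one_mem_tensorSub
    (Decomposition.isInternal 𝒜).submodule_iSupIndep hconn hcomul hx
  rw [← mulMap_eq_of_le_eqLocus φ (iSup_le_eqLocus_negPartUpTo n) hΔ, negPart_of_mem hx]
  simp [negPartUpTo, decompose_of_mem_same 𝒜 hx, negPartUpTo_of_lt hx n.lt_succ_self]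

theorem negPart_mul_of_mem_of_ne_zero (φ : H →ₐ[R] A)
    (hconn : 𝒜 0 = Submodule.span R {(1 : H)})
    (hcomul : IsGradedComul 𝒜)
    (hT : IsRotaBaxter T) {p q : ℕ} (hp : p ≠ 0) (hq : q ≠ 0)
    (IH : ∀ i j, i + j < p + q → ∀ a ∈ 𝒜 i, ∀ b ∈ 𝒜 j,
      negPart 𝒜 T φ.toLinearMap (a * b) =
        negPart 𝒜 T φ.toLinearMap a * negPart 𝒜 T φ.toLinearMap b)
    {a b : H} (ha : a ∈ 𝒜 p) (hb : b ∈ 𝒜 q) :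
    negPart 𝒜 T φ.toLinearMap (a * b) =
      negPart 𝒜 T φ.toLinearMap a * negPart 𝒜 T φ.toLinearMap b := by
  set ψ := negPart 𝒜 T φ.toLinearMap
  set Γ := mulMap ψ φ.toLinearMap
  have hind := (Decomposition.isInternal 𝒜).submodule_iSupIndep
  have hΓ : ∀ p' q', p' + q' ≤ p + q + 1 → ∀ u ∈ tensorSub (⨆ i < p', 𝒜 i) ⊤,
      ∀ v ∈ tensorSub (⨆ j < q', 𝒜 j) ⊤, Γ (u * v) = Γ u * Γ v :=
    fun p' q' hpq _ hu _ hv => mulMap_mul φ (fun _ ha _ hb => map_mul_of_mem_iSup_lt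
      (fun i hi j hj => IH i j (by omega)) ha hb) hu hv
  have hDa := comul_sub_tmul_one_mem_tensorSub hind hconn hcomul ha
  have hDb := comul_sub_tmul_one_mem_tensorSub hind hconn hcomul hb
  have ha1 : a ⊗ₜ[R] (1 : H) ∈ tensorSub (⨆ i < p + 1, 𝒜 i) ⊤ :=
    tmul_mem_tensorSub (le_iSup₂ (f := fun i (_ : i < p + 1) => 𝒜 i) p p.lt_succ_self ha) trivial
  have hb1 : b ⊗ₜ[R] (1 : H) ∈ tensorSub (⨆ j < q + 1, 𝒜 j) ⊤ :=
    tmul_mem_tensorSub (le_iSup₂ (f := fun j (_ : j < q + 1) => 𝒜 j) q q.lt_succ_self hb) trivial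
  set X : H → A := fun x => Γ (comul x - x ⊗ₜ[R] 1)
  have hX : X (a * b) = ψ a * X b + X a * ψ b + X a * X b := by
    simp only [X, comul_mul_sub_tmul_one, map_add, hΓ _ _ (by omega) _ ha1 _ hDb,
      hΓ _ _ (by omega) _ hDa _ hb1, hΓ _ _ (by omega) _ hDa _ hDb]
    simp [Γ]
  have hrec : ∀ {n} {x : H}, n ≠ 0 → x ∈ 𝒜 n → ψ x = -T (X x) :=
    fun hn hx => negPart_of_mem_of_ne_zero _ hconn hcomul hn hx
  rw [hrec (by omega) (SetLike.GradedMul.mul_mem ha hb), hX, hrec hp ha, hrec hq hb]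
  -- In positive degrees `φ₋ = -T ∘ X`, so this is the Rota–Baxter identity for `X a` and `X b`.
  have := hT (X a) (X b)
  simp only [map_add, map_neg, neg_mul, mul_neg] at this ⊢
  linear_combination -this

theorem negPart_mul (φ : H →ₐ[R] A) (hconn : 𝒜 0 = Submodule.span R {(1 : H)})
    (hcomul : IsGradedComul 𝒜)
    (hT : IsRotaBaxter T) (a b : H) :
    negPart 𝒜 T φ.toLinearMap (a * b) =
      negPart 𝒜 T φ.toLinearMap a * negPart 𝒜 T φ.toLinearMap b := by
  have hhom : ∀ N p q, p + q = N → ∀ a ∈ 𝒜 p, ∀ b ∈ 𝒜 q,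
      negPart 𝒜 T φ.toLinearMap (a * b) =
        negPart 𝒜 T φ.toLinearMap a * negPart 𝒜 T φ.toLinearMap b := by
    intro N
    induction N using Nat.strong_induction_on with
    | _ N IH =>
      rintro p q rfl a ha b hb
      rcases eq_or_ne p 0 with rfl | hp
      · rw [eq_counit_smul_one hconn ha]
        simp [negPart_one]
      rcases eq_or_ne q 0 with rfl | hq
      · rw [eq_counit_smul_one hconn hb]
        simp [negPart_one]
      exact negPart_mul_of_mem_of_ne_zero φ hconn hcomul hT hp hq
        (fun i j hij => IH _ hij i j rfl) ha hb
  induction a using Decomposition.inductionOn 𝒜 with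
  | zero => simp
  | homogeneous a =>
    induction b using Decomposition.inductionOn 𝒜 with
    | zero => simp
    | homogeneous b => exact hhom _ _ _ rfl _ a.2 _ b.2
    | add b b' hb hb' => simp [mul_add, hb, hb']
  | add a a' ha ha' => simp [add_mul, ha, ha']

theorem negPart_mem_and_convA_mem (φ : H →ₐ[R] A) (hconn : 𝒜 0 = Submodule.span R {(1 : H)})
    (hcomul : IsGradedComul 𝒜)
    {Aneg Apos : Submodule R A} (hneg : ∀ a, T a ∈ Aneg) (hpos : ∀ a, a - T a ∈ Apos)
    {h : H} (hε : counit (R := R) h = 0) :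
    negPart 𝒜 T φ.toLinearMap h ∈ Aneg ∧
      convA (negPart 𝒜 T φ.toLinearMap) φ.toLinearMap h ∈ Apos := by
  set ψ := negPart 𝒜 T φ.toLinearMap
  have hker := ker_counit_le (Decomposition.isInternal 𝒜) hconn hcomul hε
  have hrec : ∀ n ≠ 0, ∀ x ∈ 𝒜 n, ψ x = -T (mulMap ψ φ.toLinearMap (comul x - x ⊗ₜ[R] 1)) :=
    fun n hn x hx => negPart_of_mem_of_ne_zero _ hconn hcomul hn hx
  refine ⟨(iSup₂_le fun n hn x hx => ?_ : ⨆ n ≠ 0, 𝒜 n ≤ Aneg.comap ψ) hker,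
    (iSup₂_le fun n hn x hx => ?_ : ⨆ n ≠ 0, 𝒜 n ≤ Apos.comap (convA ψ φ.toLinearMap)) hker⟩
  · rw [Submodule.mem_comap, hrec n hn x hx]
    exact neg_mem (hneg _)
  · have hconv : convA ψ φ.toLinearMap x =
        mulMap ψ φ.toLinearMap (comul x - x ⊗ₜ[R] 1) + ψ x := by
      simp [convA, mulMap]
    rw [Submodule.mem_comap, hconv, hrec n hn x hx, ← sub_eq_add_neg]
    exact hpos _

end Recursion

theorem apply_eq_neg_of_comul_eq (ψ φ : H →ₐ[R] A) {T : A →ₗ[R] A} {h : H}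
    (hneg : T (ψ h) = ψ h) (hpos : T (convA ψ.toLinearMap φ.toLinearMap h) = 0)
    {m : ℕ} {f g : Fin m → H}
    (hΔ : comul (R := R) h = h ⊗ₜ[R] (1 : H) + (1 : H) ⊗ₜ[R] h + ∑ i, f i ⊗ₜ[R] g i) :
    ψ h = -T (φ h + ∑ i, ψ (f i) * φ (g i)) := by
  have hconv : convA ψ.toLinearMap φ.toLinearMap h = ψ h + (φ h + ∑ i, ψ (f i) * φ (g i)) := by
    simp [convA, hΔ]
    ring
  rw [eq_sub_of_add_eq' hconv.symm, map_sub, hpos, hneg, zero_sub, neg_neg]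

end Birkhoff

open WithConv in
theorem AlgHom.comp_antipode_convMul_self {R H A : Type*} [CommRing R] [Ring H] [HopfAlgebra R H]
    [CommRing A] [Algebra R A] (ψ : H →ₐ[R] A) :
    toConv (ψ.toLinearMap ∘ₗ HopfAlgebra.antipode R) * toConv ψ.toLinearMap = 1 := by
  have h := congrArg (fun f => ψ.toLinearMap ∘ₗ ofConv f)
    (LinearMap.antipode_mul_id (R := R) (C := H))
  simp only [LinearMap.algHom_comp_convMul_distrib, LinearMap.comp_id] at h
  apply WithConv.ext
  rw [h]
  ext x
  simp [LinearMap.convOne_def]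

open Birkhoff WithConv

theorem algebraic_birkhoff_decomposition_general
    {R H A : Type*} [Field R] [CommRing H] [HopfAlgebra R H]
    (𝒜 : ℕ → Submodule R H)
    (hdirect : DirectSum.IsInternal 𝒜)
    (hmul : ∀ (p q : ℕ), ∀ a ∈ 𝒜 p, ∀ b ∈ 𝒜 q, a * b ∈ 𝒜 (p + q))
    (hcomul : ∀ n : ℕ, ∀ h ∈ 𝒜 n,
      Coalgebra.comul (R := R) h ∈
        ⨆ (p : ℕ × ℕ) (_ : p.1 + p.2 = n), tensorSub (𝒜 p.1) (𝒜 p.2))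
    (hconn : 𝒜 0 = Submodule.span R {(1 : H)})
    [CommRing A] [Algebra R A]
    (Aneg Apos : Submodule R A) (hcompl : IsCompl Aneg Apos)
    (hnegmul : ∀ a ∈ Aneg, ∀ b ∈ Aneg, a * b ∈ Aneg)
    (hposmul : ∀ a ∈ Apos, ∀ b ∈ Apos, a * b ∈ Apos)
    (T : A →ₗ[R] A)
    (hTneg : ∀ a ∈ Aneg, T a = a) (hTpos : ∀ a ∈ Apos, T a = 0)
    (φ : H →ₐ[R] A) :
    ∃ φneg φpos : H →ₐ[R] A,
      (∀ h : H, Coalgebra.counit (R := R) h = 0 → φneg h ∈ Aneg ∧ φpos h ∈ Apos) ∧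
      φ.toLinearMap =
        convA (φneg.toLinearMap ∘ₗ HopfAlgebra.antipode (R := R) (A := H))
          φpos.toLinearMap ∧
      φpos.toLinearMap = convA φneg.toLinearMap φ.toLinearMap ∧
      φneg 1 = 1 ∧
      (∀ h : H, Coalgebra.counit (R := R) h = 0 →
        ∀ (m : ℕ) (f g : Fin m → H),
          Coalgebra.comul (R := R) h =
            h ⊗ₜ[R] (1 : H) + (1 : H) ⊗ₜ[R] h + ∑ i, f i ⊗ₜ[R] g i →
          φneg h = - T (φ h + ∑ i, φneg (f i) * φ (g i))) := by
  let _ : GradedAlgebra 𝒜 :=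
    { one_mem := hconn ▸ Submodule.mem_span_singleton_self 1
      mul_mem := fun p q _ _ ha hb => hmul p q _ ha _ hb
      toDecomposition := hdirect.chooseDecomposition }
  have hT := isRotaBaxter_of_codisjoint hcompl.codisjoint hnegmul hposmul hTneg hTpos
  have hsplit := apply_mem_and_sub_apply_mem hcompl.codisjoint hTneg hTpos
  let φneg : H →ₐ[R] A :=
    AlgHom.ofLinearMap (negPart 𝒜 T φ.toLinearMap) negPart_one (negPart_mul φ hconn hcomul hT)
  have hmem (h : H) (hε : counit (R := R) h = 0) :=
    negPart_mem_and_convA_mem φ hconn hcomul (fun a => (hsplit a).1) (fun a => (hsplit a).2) hε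
  refine ⟨φneg, (toConv φneg * toConv φ).ofConv, hmem, ?_, rfl, map_one φneg,
    fun h hε m f g hΔ => apply_eq_neg_of_comul_eq φneg φ (hTneg _ (hmem h hε).1)
      (hTpos _ (hmem h hε).2) hΔ⟩
  exact congrArg ofConv (by rw [← mul_assoc, AlgHom.comp_antipode_convMul_self, one_mul] :
    toConv φ.toLinearMap = toConv (φneg.toLinearMap ∘ₗ HopfAlgebra.antipode R) *
      (toConv φneg.toLinearMap * toConv φ.toLinearMap))

/-- Algebraic Birkhoff decomposition: let `H` be a commutative ℕ-graded connected Hopf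
algebra over a field `k` of characteristic zero, `A = A₋ ⊕ A₊` a Birkhoff sum (a commutative
unital `k`-algebra, direct sum of two `k`-subspaces each closed under multiplication), `T`
the projection onto `A₋` along `A₊`, and `φ : H → A` a unital `k`-algebra homomorphism.
Then there are unital algebra homomorphisms `φ₋, φ₊ : H → A` with `φ₋(h) ∈ A₋` and
`φ₊(h) ∈ A₊` for `h ∈ Ker ε`, such that `φ = φ₋^{*−1} * φ₊` (with `φ₋^{*−1} = φ₋ ∘ S`),
`φ₊ = φ₋ * φ`, and `φ₋` satisfies `φ₋(1) = 1` and the recursion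
`φ₋(h) = −T[φ(h) + Σ φ₋(h')φ(h'')]` for `h ∈ Ker ε` with
`Δh = h ⊗ 1 + 1 ⊗ h + Σ h' ⊗ h''`. -/
theorem algebraic_birkhoff_decomposition
    {R H A : Type*} [Field R] [CharZero R] [CommRing H] [HopfAlgebra R H]
    (𝒜 : ℕ → Submodule R H)
    (hdirect : DirectSum.IsInternal 𝒜)
    (hmul : ∀ (p q : ℕ), ∀ a ∈ 𝒜 p, ∀ b ∈ 𝒜 q, a * b ∈ 𝒜 (p + q))
    (hcomul : ∀ n : ℕ, ∀ h ∈ 𝒜 n,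
      Coalgebra.comul (R := R) h ∈
        ⨆ (p : ℕ × ℕ) (_ : p.1 + p.2 = n), tensorSub (𝒜 p.1) (𝒜 p.2))
    (hconn : 𝒜 0 = Submodule.span R {(1 : H)})
    [CommRing A] [Algebra R A]
    (Aneg Apos : Submodule R A) (hcompl : IsCompl Aneg Apos)
    (hnegmul : ∀ a ∈ Aneg, ∀ b ∈ Aneg, a * b ∈ Aneg)
    (hposmul : ∀ a ∈ Apos, ∀ b ∈ Apos, a * b ∈ Apos)
    (T : A →ₗ[R] A)
    (hTneg : ∀ a ∈ Aneg, T a = a) (hTpos : ∀ a ∈ Apos, T a = 0)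
    (φ : H →ₐ[R] A) :
    ∃ φneg φpos : H →ₐ[R] A,
      (∀ h : H, Coalgebra.counit (R := R) h = 0 → φneg h ∈ Aneg ∧ φpos h ∈ Apos) ∧
      φ.toLinearMap =
        convA (φneg.toLinearMap ∘ₗ HopfAlgebra.antipode (R := R) (A := H))
          φpos.toLinearMap ∧
      φpos.toLinearMap = convA φneg.toLinearMap φ.toLinearMap ∧
      φneg 1 = 1 ∧
      (∀ h : H, Coalgebra.counit (R := R) h = 0 →
        ∀ (m : ℕ) (f g : Fin m → H),
          Coalgebra.comul (R := R) h =
            h ⊗ₜ[R] (1 : H) + (1 : H) ⊗ₜ[R] h + ∑ i, f i ⊗ₜ[R] g i →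
          φneg h = - T (φ h + ∑ i, φneg (f i) * φ (g i))) :=
  algebraic_birkhoff_decomposition_general 𝒜 hdirect hmul hcomul hconn Aneg Apos hcompl hnegmul
    hposmul T hTneg hTpos φ
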